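/- Define the sequence H : ℕ → ℤ by H(0) = 1, H(1) = 1, and H(q) = 17·H(q−1) − H(q−2) − 3 for q ≥ 2. Then for every k ≥ 0, the continuant of the sequence consisting of k copies of the block (3,5), followed by the entries 3, 4, followed by k copies of the block (5,3), equals H(2k+2). (For example, k = 0 gives K(3,4) = 13 = H(2) and k = 1 gives K(3,5,3,4,5,3) = 3673 = H(4).) -/

import Mathlib

/-!
Continuants are the top-left entries of products of the matrices `!![a, 1; 1, 0]`. The word for
`k + 1` is the word for `k` wrapped in `[3, 5]` and `[5, 3]`, whose matrices are `A = !![16, 3; 5, 1]`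
and `Aᵀ`, so its matrix is `A * M * Aᵀ`. Three times the matrix of the word for `k` is an explicit
matrix in `H (2 * k + 2)` and `H (2 * k + 1)`, and conjugating it by `A` amounts to two steps of the
recursion of `H`.
-/

/-- The continuant: K [] = 1, K [a] = a, K (a::b::t) = a·K(b::t) + K t. -/
def continuant : List ℤ → ℤ
  | [] => 1
  | [a] => a
  | a :: b :: t => a * continuant (b :: t) + continuant t

/-- H(q) = m_{(q−1)/q}: H(0) = 1, H(1) = 1, H(q) = 17·H(q−1) − H(q−2) − 3. -/
def H : ℕ → ℤ
  | 0 => 1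
  | 1 => 1
  | (n + 2) => 17 * H (n + 1) - H n - 3

open Matrix

def continuantMatrix (l : List ℤ) : Matrix (Fin 2) (Fin 2) ℤ :=
  (l.map fun a => !![a, 1; 1, 0]).prod

lemma continuantMatrix_nil : continuantMatrix [] = 1 := rfl

lemma continuantMatrix_cons (a : ℤ) (l : List ℤ) :
    continuantMatrix (a :: l) = !![a, 1; 1, 0] * continuantMatrix l := rfl

lemma continuantMatrix_append (u v : List ℤ) :
    continuantMatrix (u ++ v) = continuantMatrix u * continuantMatrix v := by
  simp [continuantMatrix]

lemma continuantMatrix_cons_one_zero (a : ℤ) (l : List ℤ) :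
    continuantMatrix (a :: l) 1 0 = continuantMatrix l 0 0 := by
  simp [continuantMatrix_cons, mul_apply, Fin.sum_univ_two]

theorem continuantMatrix_zero_zero (l : List ℤ) : continuantMatrix l 0 0 = continuant l := by
  induction l using continuant.induct with
  | case1 => rfl
  | case2 a => simp [continuantMatrix_cons, continuantMatrix_nil, continuant]
  | case3 a b t ihbt iht =>
    rw [continuantMatrix_cons, mul_apply, Fin.sum_univ_two, continuantMatrix_cons_one_zero, ihbt,
      iht, continuant]
    simp

lemma H_add_two (n : ℕ) : H (n + 2) = 17 * H (n + 1) - H n - 3 := rfl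

def markovList (k : ℕ) : List ℤ :=
  (List.replicate k [(3 : ℤ), 5]).flatten ++ [3, 4] ++ (List.replicate k [(5 : ℤ), 3]).flatten

lemma markovList_succ (k : ℕ) : markovList (k + 1) = [3, 5] ++ markovList k ++ [5, 3] := by
  rw [markovList, markovList, List.replicate_succ, List.replicate_succ']
  simp

theorem three_smul_continuantMatrix_markovList (k : ℕ) :
    3 • continuantMatrix (markovList k) =
      !![3 * H (2 * k + 2), H (2 * k + 2) - H (2 * k + 1) - 3;
        H (2 * k + 2) - H (2 * k + 1), 5 * H (2 * k + 1) - 2] := by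
  induction k with
  | zero =>
    simp [markovList, continuantMatrix, H]
  | succ k ih =>
    have hA : continuantMatrix [3, 5] = !![16, 3; 5, 1] := by
      simp [continuantMatrix]
    have hAt : continuantMatrix [5, 3] = !![16, 5; 3, 1] := by
      simp [continuantMatrix]
    have hodd : H (2 * (k + 1) + 1) = 17 * H (2 * k + 2) - H (2 * k + 1) - 3 := H_add_two _
    have heven : H (2 * (k + 1) + 2) = 17 * H (2 * (k + 1) + 1) - H (2 * k + 2) - 3 := H_add_two _
    rw [markovList_succ, continuantMatrix_append, continuantMatrix_append, ← smul_mul,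
      ← Matrix.mul_smul, ih, hA, hAt, heven, hodd, mul_fin_two, mul_fin_two]
    ext i j
    fin_cases i <;> fin_cases j <;>
      simp only [Fin.zero_eta, Fin.mk_one, of_apply, cons_val', cons_val_zero, cons_val_one,
        cons_val_fin_one] <;>
      ring

/-- K((3,5)^k, 3, 4, (5,3)^k) = H(2k+2) for every k ≥ 0. -/
theorem continuant_q_minus_one_over_even_q (k : ℕ) :
    continuant
      ((List.replicate k [(3 : ℤ), 5]).flatten ++ [3, 4]
        ++ (List.replicate k [(5 : ℤ), 3]).flatten)
      = H (2 * k + 2) := by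
  have h := congrFun (congrFun (three_smul_continuantMatrix_markovList k) 0) 0
  rw [Matrix.smul_apply, continuantMatrix_zero_zero] at h
  exact mul_left_cancel₀ three_ne_zero h
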